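/- arXiv:2212.07580 — 9 statements merged into one kernel-verified Lean document; each statement's English description precedes it below -/
import Mathlib

section
/- For integers 1 ≤ a ≤ b with b ≥ 2, we have (a!)^(b-1) ≤ (b!)^(a-1). -/
lemma fac_le_pow_pred : ∀ a : ℕ, 1 ≤ a → Nat.factorial a ≤ a ^ (a - 1) := by
  intro a ha
  induction a with
  | zero => omega
  | succ n ih =>
    rcases Nat.eq_zero_or_pos n with h | h
    · subst h; simp [Nat.factorial]
    · calc Nat.factorial (n+1) = (n+1) * Nat.factorial n := rfl
        _ ≤ (n+1) * n ^ (n-1) := Nat.mul_le_mul_left _ (ih h)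
        _ ≤ (n+1) * (n+1) ^ (n-1) := by
              exact Nat.mul_le_mul_left _ (Nat.pow_le_pow_left (by omega) _)
        _ = (n+1) ^ (n-1+1) := by ring
        _ = (n+1) ^ (n+1-1) := by congr 1; omega

theorem stmt0 (a b : ℕ) (ha : 1 ≤ a) (hab : a ≤ b) (hb : 2 ≤ b) :
    (Nat.factorial a) ^ (b - 1) ≤ (Nat.factorial b) ^ (a - 1) := by
  rcases Nat.eq_or_lt_of_le ha with h1 | ha2
  · simp [← h1, Nat.factorial]
  induction b, hab using Nat.le_induction with
  | base => exact le_rfl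
  | succ b hab ih =>
    have ih := ih (by omega)
    have h1 : Nat.factorial a ≤ (b+1) ^ (a-1) := by
      calc Nat.factorial a ≤ a ^ (a-1) := fac_le_pow_pred a ha
        _ ≤ (b+1) ^ (a-1) := Nat.pow_le_pow_left (by omega) _
    calc Nat.factorial a ^ (b+1-1) = Nat.factorial a ^ (b-1) * Nat.factorial a := by
          rw [← pow_succ]; congr 1; omega
      _ ≤ Nat.factorial b ^ (a-1) * (b+1) ^ (a-1) := Nat.mul_le_mul ih h1
      _ = (Nat.factorial b * (b+1)) ^ (a-1) := (mul_pow _ _ _).symm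
      _ = Nat.factorial (b+1) ^ (a-1) := by rw [Nat.factorial_succ]; ring_nf
end

section
/- Let G be a bipartite graph with left vertex set L of size m, where every left vertex has degree at least 1, and suppose the sum over all left vertices v of 1/deg(v) is at most 1. Then G has a matching saturating L. -/
theorem stmt1 {L R : Type*} [Fintype L] [Fintype R]
    (m : ℕ) (hm : Fintype.card L = m)
    (adj : L → R → Prop) [∀ v, DecidablePred (adj v)]
    (hdeg : ∀ v : L, 1 ≤ (Finset.univ.filter (adj v)).card)
    (hsum : ∑ v : L, (1 : ℚ) / ((Finset.univ.filter (adj v)).card : ℚ) ≤ 1) :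
    ∃ f : L → R, Function.Injective f ∧ ∀ v, adj v (f v) := by
  classical
  set t : L → Finset R := fun v => Finset.univ.filter (adj v) with ht
  have hall : ∀ S : Finset L, S.card ≤ (S.biUnion t).card := by
    intro S
    rcases S.eq_empty_or_nonempty with rfl | hS
    · simp
    set N := (S.biUnion t).card with hN
    have hNpos : 0 < N := by
      obtain ⟨v, hv⟩ := hS
      have : (t v).Nonempty := Finset.card_pos.mp (hdeg v)
      obtain ⟨r, hr⟩ := this
      exact Finset.card_pos.mpr ⟨r, Finset.mem_biUnion.mpr ⟨v, hv, hr⟩⟩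
    -- each term over S is ≥ 1/N
    have key : (S.card : ℚ) / N ≤ ∑ v ∈ S, (1 : ℚ) / ((t v).card : ℚ) := by
      have : ∀ v ∈ S, (1 : ℚ) / N ≤ 1 / ((t v).card : ℚ) := by
        intro v hv
        apply one_div_le_one_div_of_le
        · exact_mod_cast hdeg v
        · exact_mod_cast Finset.card_le_card (fun r hr => Finset.mem_biUnion.mpr ⟨v, hv, hr⟩)
      calc (S.card : ℚ) / N = ∑ _v ∈ S, (1 : ℚ) / N := by
            rw [Finset.sum_const, nsmul_eq_mul]; ring
        _ ≤ _ := Finset.sum_le_sum this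
    have hle1 : ∑ v ∈ S, (1 : ℚ) / ((t v).card : ℚ) ≤ 1 := by
      refine le_trans ?_ hsum
      apply Finset.sum_le_sum_of_subset_of_nonneg (Finset.subset_univ S)
      intro v _ _
      positivity
    have : (S.card : ℚ) ≤ N := by
      have := key.trans hle1
      rw [div_le_one (by exact_mod_cast hNpos)] at this
      exact this
    exact_mod_cast this
  obtain ⟨f, hf, hmem⟩ := (Finset.all_card_le_biUnion_card_iff_exists_injective t).mp hall
  exact ⟨f, hf, fun v => (Finset.mem_filter.mp (hmem v)).2⟩
end

section
/- Let V be a finite-dimensional vector space over a field F, let t ≥ 2, and let φ: V^t → F be a multilinear map. Suppose (x_{j,1},...,x_{j,t}) ∈ V^t for j = 1,...,N satisfy φ(x_{j,1},...,x_{j,t}) ≠ 0 for all j, with N > (t-1)·dim V. Then there exist distinct indices j_1,...,j_t ∈ {1,...,N} and vectors y_1,...,y_t with y_i ∈ {x_{j_i,1},...,x_{j_i,t}} for each i, such that φ(y_1,...,y_t) ≠ 0. -/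
open Function

theorem aux_stmt5 {F : Type*} [Field F] {V : Type*} [AddCommGroup V] [Module F V]
    [FiniteDimensional F V] {ι : Type*} (t : ℕ) (ht : 2 ≤ t) :
    ∀ (d : ℕ) (W : Submodule F V), Module.finrank F W ≤ d →
      ∀ (S : Finset ι) (φ : MultilinearMap F (fun _ : Fin t => V) F)
        (x : ι → Fin t → V),
        (∀ j ∈ S, ∀ k, x j k ∈ W) →
        (∀ j ∈ S, φ (x j) ≠ 0) →
        (t - 1) * d < S.card →
        ∃ (j : Fin t → ι) (y : Fin t → V), Function.Injective j ∧ (∀ i, j i ∈ S) ∧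
          (∀ i, ∃ k, y i = x (j i) k) ∧ φ y ≠ 0 := by
  intro d
  induction d with
  | zero =>
    intro W hW S φ x hxW hφ hcard
    exfalso
    have hS : S.Nonempty := Finset.card_pos.mp (lt_of_le_of_lt (Nat.zero_le _) hcard)
    obtain ⟨j₀, hj₀⟩ := hS
    have hWbot : W = ⊥ := Submodule.finrank_eq_zero.mp (Nat.le_zero.mp hW)
    have hx0 : x j₀ ⟨0, by omega⟩ = 0 := by
      have := hxW j₀ hj₀ ⟨0, by omega⟩
      rw [hWbot, Submodule.mem_bot] at this
      exact this
    exact hφ j₀ hj₀ (φ.map_coord_zero _ hx0)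
  | succ d ih =>
    intro W hW S φ x hxW hφ hcard
    classical
    set Good : ℕ → Prop := fun s =>
      ∃ (j : Fin t → ι) (y : Fin t → V),
        (∀ i₁ i₂ : Fin t, (i₁ : ℕ) < s → (i₂ : ℕ) < s → j i₁ = j i₂ → i₁ = i₂) ∧
        (∀ i : Fin t, (i : ℕ) < s → j i ∈ S ∧ ∃ k, y i = x (j i) k) ∧
        (∀ i, y i ∈ W) ∧ φ y ≠ 0 with hGoodDef
    have hS : S.Nonempty := Finset.card_pos.mp (lt_of_le_of_lt (Nat.zero_le _) hcard)
    obtain ⟨j₀, hj₀⟩ := hS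
    have hGood1 : Good 1 := by
      refine ⟨fun _ => j₀, x j₀, ?_, ?_, fun i => hxW j₀ hj₀ i, hφ j₀ hj₀⟩
      · intro i₁ i₂ h1 h2 _
        exact Fin.ext (by omega)
      · intro i _
        exact ⟨hj₀, i, rfl⟩
    set s : ℕ := Nat.findGreatest Good t with hsdef
    have hs1 : 1 ≤ s := Nat.le_findGreatest (by omega) hGood1
    have hst : s ≤ t := Nat.findGreatest_le t
    have hGs : Good s := Nat.findGreatest_spec (by omega : 1 ≤ t) hGood1
    obtain ⟨j, y, hinj, hmem, hyW, hφy⟩ := hGs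
    by_cases hseq : t ≤ s
    · -- s = t : we are done
      refine ⟨j, y, ?_, ?_, ?_, hφy⟩
      · intro a b hab
        exact hinj a b (lt_of_lt_of_le a.isLt hseq) (lt_of_lt_of_le b.isLt hseq) hab
      · intro i
        exact (hmem i (lt_of_lt_of_le i.isLt hseq)).1
      · intro i
        exact (hmem i (lt_of_lt_of_le i.isLt hseq)).2
    · push_neg at hseq
      have hnG : ¬ Good (s + 1) := Nat.findGreatest_is_greatest (hsdef ▸ Nat.lt_succ_self s) (by omega)
      set sF : Fin t := ⟨s, hseq⟩ with hsFdef
      set W' : Submodule F V :=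
        ⨅ z : Fin t → W, LinearMap.ker
          (φ.toLinearMap (fun i => if (i : ℕ) < s then y i else (z i : V)) sF) with hW'def
      have hmemW' : ∀ v : V, v ∈ W' ↔
          ∀ z : Fin t → W,
            φ (update (fun i => if (i : ℕ) < s then y i else (z i : V)) sF v) = 0 := by
        intro v
        simp [hW'def, Submodule.mem_iInf, LinearMap.mem_ker]
      -- rows outside the chosen prefix lie in W'
      have hrows : ∀ a ∈ S, (∀ i : Fin t, (i : ℕ) < s → a ≠ j i) → ∀ k, x a k ∈ W' := by
        intro a haS hane k
        rw [hmemW']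
        intro z
        by_contra h
        apply hnG
        refine ⟨update j sF a,
          update (fun i => if (i : ℕ) < s then y i else (z i : V)) sF (x a k), ?_, ?_, ?_, h⟩
        · intro i₁ i₂ h1 h2 heq
          by_cases e1 : i₁ = sF <;> by_cases e2 : i₂ = sF
          · rw [e1, e2]
          · exfalso
            rw [e1, update_self, update_of_ne e2] at heq
            have hi2 : (i₂ : ℕ) < s := by
              rcases lt_or_eq_of_le (Nat.lt_succ_iff.mp h2) with h | h
              · exact h
              · exact absurd (Fin.ext h : i₂ = sF) e2
            exact hane i₂ hi2 heq
          · exfalso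
            rw [e2, update_self, update_of_ne e1] at heq
            have hi1 : (i₁ : ℕ) < s := by
              rcases lt_or_eq_of_le (Nat.lt_succ_iff.mp h1) with h | h
              · exact h
              · exact absurd (Fin.ext h : i₁ = sF) e1
            exact hane i₁ hi1 heq.symm
          · rw [update_of_ne e1, update_of_ne e2] at heq
            have hi1 : (i₁ : ℕ) < s := by
              rcases lt_or_eq_of_le (Nat.lt_succ_iff.mp h1) with h | h
              · exact h
              · exact absurd (Fin.ext h : i₁ = sF) e1
            have hi2 : (i₂ : ℕ) < s := by
              rcases lt_or_eq_of_le (Nat.lt_succ_iff.mp h2) with h | h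
              · exact h
              · exact absurd (Fin.ext h : i₂ = sF) e2
            exact hinj i₁ i₂ hi1 hi2 heq
        · intro i hi
          by_cases e : i = sF
          · rw [e, update_self, update_self]
            exact ⟨haS, k, rfl⟩
          · have hi' : (i : ℕ) < s := by
              rcases lt_or_eq_of_le (Nat.lt_succ_iff.mp hi) with h | h
              · exact h
              · exact absurd (Fin.ext h : i = sF) e
            rw [update_of_ne e, update_of_ne e, if_pos hi']
            exact hmem i hi'
        · intro i
          by_cases e : i = sF
          · rw [e, update_self]
            exact hxW a haS k
          · rw [update_of_ne e]
            by_cases hi' : (i : ℕ) < s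
            · rw [if_pos hi']; exact hyW i
            · rw [if_neg hi']; exact (z i).2
      -- y sF witnesses that W ⊓ W' < W
      have hysW : y sF ∈ W := hyW sF
      have hysnW' : y sF ∉ W' := by
        rw [hmemW']
        push_neg
        refine ⟨fun i => ⟨y i, hyW i⟩, ?_⟩
        have hbase : (fun i : Fin t => if (i : ℕ) < s then y i else ((⟨y i, hyW i⟩ : W) : V)) = y := by
          funext i; by_cases h : (i : ℕ) < s <;> simp [h]
        rw [hbase, update_eq_self]
        exact hφy
      have hlt : W ⊓ W' < W := by
        refine lt_of_le_of_ne inf_le_left ?_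
        intro h
        have : y sF ∈ W ⊓ W' := by rw [h]; exact hysW
        exact hysnW' this.2
      have hfr : Module.finrank F ↥(W ⊓ W') ≤ d := by
        have := Submodule.finrank_lt_finrank_of_lt hlt
        omega
      -- the remaining rows
      set S' : Finset ι := S.filter (fun a => ∀ i : Fin t, (i : ℕ) < s → a ≠ j i) with hS'def
      have hS'card : (t - 1) * d < S'.card := by
        have hcover : S ⊆ S' ∪ Finset.image (fun i : Fin s => j (Fin.castLE hst i))
            Finset.univ := by
          intro a haS
          by_cases h : ∀ i : Fin t, (i : ℕ) < s → a ≠ j i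
          · exact Finset.mem_union_left _ (Finset.mem_filter.mpr ⟨haS, h⟩)
          · push_neg at h
            obtain ⟨i, hi, he⟩ := h
            refine Finset.mem_union_right _ (Finset.mem_image.mpr ⟨⟨i, hi⟩, Finset.mem_univ _, ?_⟩)
            rw [he]
            congr 1
        have h1 : S.card ≤ S'.card + s := by
          calc S.card ≤ (S' ∪ _).card := Finset.card_le_card hcover
            _ ≤ S'.card + (Finset.image (fun i : Fin s => j (Fin.castLE hst i))
                Finset.univ).card := Finset.card_union_le _ _
            _ ≤ S'.card + s := by
                have := Finset.card_image_le (s := (Finset.univ : Finset (Fin s)))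
                  (f := fun i : Fin s => j (Fin.castLE hst i))
                simp only [Finset.card_univ, Fintype.card_fin] at this
                omega
        have h2 : (t - 1) * (d + 1) = (t - 1) * d + (t - 1) := by ring
        omega
      obtain ⟨j', y', hinj', hmem', hcol', hφ'⟩ :=
        ih (W ⊓ W') hfr S' φ x
          (fun a haS' k => by
            have haS : a ∈ S := Finset.mem_filter.mp haS' |>.1
            have hane := (Finset.mem_filter.mp haS').2
            exact Submodule.mem_inf.mpr ⟨hxW a haS k, hrows a haS hane k⟩)
          (fun a haS' => hφ a (Finset.mem_filter.mp haS').1)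
          hS'card
      exact ⟨j', y', hinj', fun i => (Finset.mem_filter.mp (hmem' i)).1, hcol', hφ'⟩

theorem stmt5 {F : Type*} [Field F] {V : Type*} [AddCommGroup V] [Module F V]
    [FiniteDimensional F V] (t N : ℕ) (ht : 2 ≤ t)
    (hN : (t - 1) * Module.finrank F V < N)
    (φ : MultilinearMap F (fun _ : Fin t => V) F)
    (x : Fin N → Fin t → V)
    (hx : ∀ j, φ (x j) ≠ 0) :
    ∃ (j : Fin t → Fin N) (y : Fin t → V), Function.Injective j ∧
      (∀ i, ∃ k, y i = x (j i) k) ∧ φ y ≠ 0 := by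
  obtain ⟨j, y, hinj, _, hcol, hφy⟩ :=
    aux_stmt5 t ht (Module.finrank F V) ⊤ (by rw [finrank_top]) Finset.univ φ x
      (fun j _ k => Submodule.mem_top)
      (fun j _ => hx j)
      (by simpa using hN)
  exact ⟨j, y, hinj, hcol, hφy⟩
end

section
/- For every t ≥ 2 and every dimension d ≥ 0 there is a field F, a vector space V over F with dim V = d, a multilinear map φ: V^t → F, and a collection of N = (t-1)·d tuples (x_{j,1},...,x_{j,t}) ∈ V^t with φ(x_{j,1},...,x_{j,t}) ≠ 0 for all j, such that for all distinct indices j_1,...,j_t and all choices y_i ∈ {x_{j_i,1},...,x_{j_i,t}}, one has φ(y_1,...,y_t) = 0. -/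
theorem stmt6 (t d : ℕ) (ht : 2 ≤ t) :
    ∃ (F : Type) (instF : Field F) (V : Type) (instV : AddCommGroup V),
      letI := instF; letI := instV;
      ∃ instM : Module F V,
        letI := instM;
        Module.finrank F V = d ∧
        ∃ (φ : MultilinearMap F (fun _ : Fin t => V) F)
          (x : Fin ((t - 1) * d) → Fin t → V),
          (∀ j, φ (x j) ≠ 0) ∧
          ∀ (j : Fin t → Fin ((t - 1) * d)) (y : Fin t → V),
            Function.Injective j → (∀ i, ∃ k, y i = x (j i) k) → φ y = 0 := by
  have htm : 0 < t - 1 := by omega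
  refine ⟨ℚ, inferInstance, Fin d → ℚ, inferInstance, inferInstance,
    Module.finrank_fin_fun ℚ, ?_⟩
  have hblk : ∀ j : Fin ((t - 1) * d), j.val / (t - 1) < d := by
    intro j
    rw [Nat.div_lt_iff_lt_mul htm]
    have := j.isLt
    calc j.val < (t - 1) * d := this
    _ = d * (t - 1) := Nat.mul_comm _ _
  set blk : Fin ((t - 1) * d) → Fin d := fun j => ⟨j.val / (t - 1), hblk j⟩ with hblkdef
  set φ : MultilinearMap ℚ (fun _ : Fin t => Fin d → ℚ) ℚ :=
    ∑ s : Fin d, (MultilinearMap.mkPiAlgebra ℚ (Fin t) ℚ).compLinearMap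
      (fun _ => LinearMap.proj s) with hφ
  have hφapp : ∀ y : Fin t → (Fin d → ℚ), φ y = ∑ s : Fin d, ∏ i : Fin t, y i s := by
    intro y
    simp [hφ, MultilinearMap.sum_apply]
  refine ⟨φ, fun j _ => (Pi.single (blk j) (1 : ℚ) : Fin d → ℚ), ?_, ?_⟩
  · intro j
    rw [hφapp]
    have : ∀ s : Fin d, (∏ _i : Fin t, (Pi.single (blk j) (1 : ℚ) : Fin d → ℚ) s)
        = (Pi.single (blk j) (1 : ℚ) : Fin d → ℚ) s := by
      intro s
      rw [Finset.prod_const, Finset.card_fin]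
      rcases eq_or_ne s (blk j) with h | h
      · subst h; simp
      · simp [Pi.single_apply, h, zero_pow (by omega : t ≠ 0)]
    rw [Finset.sum_congr rfl fun s _ => this s]
    simp
  · intro j y hj hy
    -- each y i is the basis vector of the block of j i
    have hyi : ∀ i, y i = Pi.single (blk (j i)) (1 : ℚ) := by
      intro i
      obtain ⟨k, hk⟩ := hy i
      exact hk
    -- pigeonhole: two distinct blocks appear
    have hex : ∃ i₁ i₂ : Fin t, blk (j i₁) ≠ blk (j i₂) := by
      by_contra h
      push_neg at h
      have hg : ¬ Function.Injective
          (fun i : Fin t => (⟨(j i).val % (t - 1), Nat.mod_lt _ htm⟩ : Fin (t - 1))) := by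
        intro hinj
        have := Fintype.card_le_of_injective _ hinj
        simp at this
        omega
      rw [Function.not_injective_iff] at hg
      obtain ⟨i₁, i₂, heq, hne⟩ := hg
      apply hne
      apply hj
      apply Fin.ext
      have h1 : (j i₁).val % (t - 1) = (j i₂).val % (t - 1) := by
        exact congrArg Fin.val heq
      have h2 : (j i₁).val / (t - 1) = (j i₂).val / (t - 1) := by
        exact congrArg Fin.val (h i₁ i₂)
      calc (j i₁).val = (t - 1) * ((j i₁).val / (t - 1)) + (j i₁).val % (t - 1) :=
            (Nat.div_add_mod _ _).symm
        _ = (t - 1) * ((j i₂).val / (t - 1)) + (j i₂).val % (t - 1) := by rw [h1, h2]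
        _ = (j i₂).val := Nat.div_add_mod _ _
    obtain ⟨i₁, i₂, hne⟩ := hex
    rw [hφapp]
    apply Finset.sum_eq_zero
    intro s _
    rcases eq_or_ne s (blk (j i₁)) with h | h
    · apply Finset.prod_eq_zero (Finset.mem_univ i₂)
      rw [hyi i₂, Pi.single_apply, if_neg]
      rw [h]; exact hne
    · apply Finset.prod_eq_zero (Finset.mem_univ i₁)
      rw [hyi i₁, Pi.single_apply, if_neg h]
end

section
/- Let t ≥ 3, r ≥ 2, P a prime, and let (z_1,...,z_t), (z_1',...,z_t') ∈ Z_1 × ... × Z_t be tuples with z_1 + ... + z_t = 𝟙 = z_1' + ... + z_t' (as integer vectors) and (z_1,...,z_t) ≠ (z_1',...,z_t'). Then the dimension d of the F_P-span of {z_1,...,z_t,z_1',...,z_t'} satisfies t+1 ≤ d ≤ 2t-1. -/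
theorem stmt11 (t r P : ℕ) (ht : 3 ≤ t) (hr : 2 ≤ r) [Fact P.Prime]
    (z z' : Fin t → Fin r → Fin t → ℕ)
    (h01 : ∀ i k j, z i k j = 0 ∨ z i k j = 1)
    (h01' : ∀ i k j, z' i k j = 0 ∨ z' i k j = 1)
    (hblock : ∀ i k, ∑ j, z i k j = 1)
    (hblock' : ∀ i k, ∑ j, z' i k j = 1)
    (hZi : ∀ i : Fin t, z i ⟨0, by omega⟩ i = 1)
    (hZi' : ∀ i : Fin t, z' i ⟨0, by omega⟩ i = 1)
    (hsum : ∀ k j, ∑ i, z i k j = 1)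
    (hsum' : ∀ k j, ∑ i, z' i k j = 1)
    (hne : z ≠ z') :
    t + 1 ≤ Module.finrank (ZMod P) (Submodule.span (ZMod P)
        (Set.range (Sum.elim
          (fun i : Fin t => fun p : Fin r × Fin t => ((z i p.1 p.2 : ℕ) : ZMod P))
          (fun i : Fin t => fun p : Fin r × Fin t => ((z' i p.1 p.2 : ℕ) : ZMod P))))) ∧
    Module.finrank (ZMod P) (Submodule.span (ZMod P)
        (Set.range (Sum.elim
          (fun i : Fin t => fun p : Fin r × Fin t => ((z i p.1 p.2 : ℕ) : ZMod P))
          (fun i : Fin t => fun p : Fin r × Fin t => ((z' i p.1 p.2 : ℕ) : ZMod P)))))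
      ≤ 2 * t - 1 := by
  have hP2 : 2 ≤ P := (Fact.out : P.Prime).two_le
  have h10 : (1 : ZMod P) ≠ 0 := by
    haveI : Fact (1 < P) := ⟨by omega⟩
    exact one_ne_zero
  set k0 : Fin r := ⟨0, by omega⟩ with hk0
  set zf : Fin t → (Fin r × Fin t) → ZMod P :=
    fun i p => ((z i p.1 p.2 : ℕ) : ZMod P) with hzf
  set z'f : Fin t → (Fin r × Fin t) → ZMod P :=
    fun i p => ((z' i p.1 p.2 : ℕ) : ZMod P) with hz'f
  -- delta structure on block 0
  have hdelta : ∀ (w : Fin t → Fin r → Fin t → ℕ),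
      (∀ i k, ∑ j, w i k j = 1) → (∀ i, w i k0 i = 1) →
      ∀ i j, w i k0 j = if j = i then 1 else 0 := by
    intro w hb hZ i j
    by_cases hji : j = i
    · simp [hji, hZ i]
    · simp only [if_neg hji]
      have hs := hb i k0
      have h2 : ∑ j' ∈ Finset.univ.erase i, w i k0 j' + w i k0 i = ∑ j', w i k0 j' :=
        Finset.sum_erase_add Finset.univ (fun j' => w i k0 j') (Finset.mem_univ i)
      have h0 : ∑ j' ∈ Finset.univ.erase i, w i k0 j' = 0 := by
        rw [hZ i] at h2; omega
      exact Finset.sum_eq_zero_iff.mp h0 j (Finset.mem_erase.mpr ⟨hji, Finset.mem_univ j⟩)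
  have hdz := hdelta z hblock hZi
  have hdz' := hdelta z' hblock' hZi'
  -- linear independence of zf
  have hindep : LinearIndependent (ZMod P) zf := by
    rw [Fintype.linearIndependent_iff]
    intro c hc j
    have := congrFun hc (k0, j)
    simp only [Finset.sum_apply, Pi.smul_apply, hzf, smul_eq_mul, Pi.zero_apply] at this
    rw [Finset.sum_congr rfl (fun i _ => by rw [hdz i j])] at this
    simpa using this
  -- equality of casts for 0/1 values
  have hcast : ∀ a b : ℕ, (a = 0 ∨ a = 1) → (b = 0 ∨ b = 1) →
      ((a : ZMod P) = (b : ZMod P)) → a = b := by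
    rintro a b (rfl | rfl) (rfl | rfl) h <;> simp_all
  -- some z'f i is not in span of zf
  have hnotall : ∃ i, z'f i ∉ Submodule.span (ZMod P) (Set.range zf) := by
    by_contra hall
    push_neg at hall
    apply hne
    have key : ∀ i, z'f i = zf i := by
      intro i
      obtain ⟨c, hc⟩ := (Submodule.mem_span_range_iff_exists_fun (ZMod P)).mp (hall i)
      have hcj : ∀ j, c j = if j = i then 1 else 0 := by
        intro j
        have := congrFun hc (k0, j)
        simp only [Finset.sum_apply, Pi.smul_apply, hzf, hz'f, smul_eq_mul] at this
        rw [Finset.sum_congr rfl (fun m _ => by rw [hdz m j]), hdz' i j] at this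
        simpa using this
      rw [← hc]
      funext p
      simp only [Finset.sum_apply, Pi.smul_apply, smul_eq_mul]
      rw [Finset.sum_congr rfl (fun m _ => by rw [hcj m])]
      simp
    funext i k j
    exact hcast _ _ (h01 i k j) (h01' i k j) (congrFun (key i) (k, j)).symm
  set F : Fin t ⊕ Fin t → (Fin r × Fin t) → ZMod P := Sum.elim zf z'f with hF
  have hFD : FiniteDimensional (ZMod P) ((Fin r × Fin t) → ZMod P) := inferInstance
  constructor
  · -- lower bound
    obtain ⟨i1, hi1⟩ := hnotall
    have hlt : Submodule.span (ZMod P) (Set.range zf) <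
        Submodule.span (ZMod P) (Set.range F) := by
      refine lt_of_le_of_ne (Submodule.span_mono ?_) ?_
      · rintro x ⟨i, rfl⟩; exact ⟨Sum.inl i, rfl⟩
      · intro hEq
        exact hi1 (hEq ▸ Submodule.subset_span ⟨Sum.inr i1, rfl⟩)
    have h1 := Submodule.finrank_lt_finrank_of_lt hlt
    have h2 : Module.finrank (ZMod P)
        (Submodule.span (ZMod P) (Set.range zf)) = t := by
      rw [finrank_span_eq_card hindep, Fintype.card_fin]
    omega
  · -- upper bound
    set i0 : Fin t := ⟨0, by omega⟩ with hi0
    set S : Finset (Fin t ⊕ Fin t) := Finset.univ.erase (Sum.inr i0) with hS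
    set T : Finset ((Fin r × Fin t) → ZMod P) := S.image F with hT
    have hmemT : ∀ s ∈ S, F s ∈ Submodule.span (ZMod P) (T : Set _) := by
      intro s hs
      exact Submodule.subset_span (Finset.mem_coe.mpr (Finset.mem_image_of_mem F hs))
    have hsumeq : ∑ i, zf i = ∑ i, z'f i := by
      funext p
      simp only [Finset.sum_apply, hzf, hz'f]
      rw [← Nat.cast_sum, ← Nat.cast_sum, hsum p.1 p.2, hsum' p.1 p.2]
    have hrel : F (Sum.inr i0) ∈ Submodule.span (ZMod P) (T : Set _) := by
      have heq : z'f i0 = (∑ i, zf i) - ∑ i ∈ Finset.univ.erase i0, z'f i := by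
        have h2 := Finset.sum_erase_add Finset.univ z'f (Finset.mem_univ i0)
        rw [hsumeq, ← h2]; abel
      show z'f i0 ∈ _
      rw [heq]
      refine Submodule.sub_mem _ (Submodule.sum_mem _ fun i _ => ?_)
        (Submodule.sum_mem _ fun i hi => ?_)
      · exact hmemT (Sum.inl i) (Finset.mem_erase.mpr ⟨by simp, Finset.mem_univ _⟩)
      · exact hmemT (Sum.inr i)
          (Finset.mem_erase.mpr ⟨by simpa using (Finset.mem_erase.mp hi).1, Finset.mem_univ _⟩)
    have hle : Submodule.span (ZMod P) (Set.range F) ≤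
        Submodule.span (ZMod P) (T : Set _) := by
      rw [Submodule.span_le]
      rintro x ⟨s, rfl⟩
      by_cases hs : s = Sum.inr i0
      · exact hs ▸ hrel
      · exact hmemT s (Finset.mem_erase.mpr ⟨hs, Finset.mem_univ _⟩)
    have h1 := Submodule.finrank_mono hle
    have h2 := finrank_span_finset_le_card (R := ZMod P) T
    have h3 : T.card ≤ S.card := Finset.card_image_le
    have h4 : S.card = 2 * t - 1 := by
      rw [hS, Finset.card_erase_of_mem (Finset.mem_univ _)]
      simp [Fintype.card_sum]
      omega
    unfold Set.finrank at h2
    omega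
end

section
/- Let t ≥ 2, r ≥ 2, P a prime, and let (z_1,...,z_t), (z_1',...,z_t') ∈ Z_1 × ... × Z_t be tuples with z_1 + ... + z_t = 𝟙 = z_1' + ... + z_t' as integer vectors. Define the bipartite graph G on left vertices {1,...,t} and right vertices {1,...,t}, with an edge (i,j) whenever z_i and z_j' have a 1-entry in a common position. Then the number of connected components of G is at least 2t − dim span_{F_P}(z_1,...,z_t,z_1',...,z_t'). -/
/-!
By rank–nullity, `2t - dim span` is the dimension of the space of linear relations
`∑ aᵢ zᵢ + ∑ bⱼ z'ⱼ = 0`. Every position is covered by exactly one `zᵢ` and exactly one `z'ⱼ`,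
so reading such a relation at a common 1-entry of `zᵢ` and `z'ⱼ` gives `aᵢ = -bⱼ`. Hence
`(a, -b)` is constant on the components of the graph, and the relations embed into the
functions on the set of components.
-/

open Module Submodule

namespace SimpleGraph

variable {V : Type*} {G : SimpleGraph V}

theorem Reachable.apply_eq_of_forall_adj {α : Type*} {f : V → α}
    (hf : ∀ u v, G.Adj u v → f u = f v) {u v : V} (h : G.Reachable u v) : f u = f v := by
  obtain ⟨p⟩ := h
  induction p with
  | nil => rfl
  | cons hadj _ ih => exact (hf _ _ hadj).trans ih

theorem finrank_le_card_connectedComponent {K : Type*} [Field K] [Finite G.ConnectedComponent]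
    (ε : V → K) (hε : ∀ v, ε v ≠ 0) (W : Submodule K (V → K))
    (hW : ∀ a ∈ W, ∀ u v, G.Adj u v → ε u * a u = ε v * a v) :
    finrank K W ≤ Nat.card G.ConnectedComponent := by
  let lift : (G.ConnectedComponent → K) →ₗ[K] V → K :=
    LinearMap.mulLeft K ε⁻¹ ∘ₗ LinearMap.funLeft K K G.connectedComponentMk
  have hW_le : W ≤ LinearMap.range lift := by
    intro a ha
    refine ⟨Quot.lift (ε * a) fun u v huv => huv.apply_eq_of_forall_adj (hW a ha), ?_⟩
    ext v
    exact inv_mul_cancel_left₀ (hε v) (a v)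
  have := Fintype.ofFinite G.ConnectedComponent
  calc finrank K W ≤ finrank K (LinearMap.range lift) := Submodule.finrank_mono hW_le
    _ ≤ finrank K (G.ConnectedComponent → K) := LinearMap.finrank_range_le lift
    _ = Nat.card G.ConnectedComponent := by rw [finrank_pi, Nat.card_eq_fintype_card]

end SimpleGraph

theorem Finset.sum_mul_natCast_eq_of_sum_eq_one {ι R : Type*} [Fintype ι] [Semiring R]
    {g : ι → ℕ} (hg : ∑ i, g i = 1) {i₀ : ι} (hi₀ : g i₀ = 1) (a : ι → R) :
    ∑ i, a i * g i = a i₀ := by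
  classical
  have hrest : ∑ i ∈ Finset.univ.erase i₀, g i = 0 := by
    have := Finset.add_sum_erase Finset.univ g (Finset.mem_univ i₀)
    omega
  rw [Finset.sum_eq_single i₀ (fun i _ hi => ?_) (by simp), hi₀, Nat.cast_one, mul_one]
  rw [(Finset.sum_eq_zero_iff.mp hrest) i (Finset.mem_erase.mpr ⟨hi, Finset.mem_univ i⟩),
    Nat.cast_zero, mul_zero]

variable {ι κ σ : Type*}

def overlapGraph (w : ι → σ → ℕ) (w' : κ → σ → ℕ) : SimpleGraph (ι ⊕ κ) :=
  SimpleGraph.fromRel fun a b => ∃ i j, a = Sum.inl i ∧ b = Sum.inr j ∧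
    ∃ p, w i p = 1 ∧ w' j p = 1

variable [Fintype ι] [Fintype κ] {K : Type*}

theorem apply_inl_add_apply_inr_eq_zero_of_mem_ker [CommRing K]
    {w : ι → σ → ℕ} {w' : κ → σ → ℕ} (hw : ∀ p, ∑ i, w i p = 1) (hw' : ∀ p, ∑ j, w' j p = 1)
    {a : ι ⊕ κ → K}
    (ha : a ∈ LinearMap.ker (Fintype.linearCombination K
      (Sum.elim (fun i p => (w i p : K)) (fun j p => (w' j p : K)))))
    {i : ι} {j : κ} {p : σ} (hi : w i p = 1) (hj : w' j p = 1) :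
    a (Sum.inl i) + a (Sum.inr j) = 0 := by
  have := congrFun (LinearMap.mem_ker.mp ha) p
  simpa only [Fintype.linearCombination_apply, Finset.sum_apply, Fintype.sum_sum_type,
    Pi.smul_apply, Pi.zero_apply, Sum.elim_inl, Sum.elim_inr, smul_eq_mul,
    Finset.sum_mul_natCast_eq_of_sum_eq_one (hw p) hi,
    Finset.sum_mul_natCast_eq_of_sum_eq_one (hw' p) hj] using this

theorem card_sub_finrank_span_le_card_connectedComponent [Field K]
    (w : ι → σ → ℕ) (w' : κ → σ → ℕ)
    (hw : ∀ p, ∑ i, w i p = 1) (hw' : ∀ p, ∑ j, w' j p = 1) :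
    Fintype.card ι + Fintype.card κ - finrank K (span K (Set.range
        (Sum.elim (fun i p => (w i p : K)) (fun j p => (w' j p : K)))))
      ≤ Nat.card (overlapGraph w w').ConnectedComponent := by
  set φ := Fintype.linearCombination K
    (Sum.elim (fun i p => (w i p : K)) (fun j p => (w' j p : K)))
  have hrank := LinearMap.finrank_range_add_finrank_ker φ
  rw [Fintype.range_linearCombination, finrank_fintype_fun_eq_card, Fintype.card_sum] at hrank
  -- kernel vectors are constant on components once the right-hand coefficients are negated
  have hker := (overlapGraph w w').finrank_le_card_connectedComponent
    (Sum.elim 1 (-1)) (by rintro (i | j) <;> simp) (LinearMap.ker φ) ?_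
  · omega
  rintro a ha u v ⟨-, ⟨i, j, rfl, rfl, p, hi, hj⟩ | ⟨i, j, rfl, rfl, p, hi, hj⟩⟩
  · simp only [Sum.elim_inl, Sum.elim_inr, Pi.one_apply, Pi.neg_apply]
    linear_combination apply_inl_add_apply_inr_eq_zero_of_mem_ker hw hw' ha hi hj
  · simp only [Sum.elim_inl, Sum.elim_inr, Pi.one_apply, Pi.neg_apply]
    linear_combination -apply_inl_add_apply_inr_eq_zero_of_mem_ker hw hw' ha hi hj

theorem stmt12 (t r P : ℕ) [Fact P.Prime]
    (z z' : Fin t → Fin r → Fin t → ℕ)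
    (hsum : ∀ k j, ∑ i, z i k j = 1)
    (hsum' : ∀ k j, ∑ i, z' i k j = 1) :
    2 * t - Module.finrank (ZMod P) (Submodule.span (ZMod P)
        (Set.range (Sum.elim
          (fun i : Fin t => fun p : Fin r × Fin t => ((z i p.1 p.2 : ℕ) : ZMod P))
          (fun i : Fin t => fun p : Fin r × Fin t => ((z' i p.1 p.2 : ℕ) : ZMod P)))))
      ≤ Nat.card (SimpleGraph.fromRel (fun a b : Fin t ⊕ Fin t =>
          ∃ i j, a = Sum.inl i ∧ b = Sum.inr j ∧
            ∃ p : Fin r × Fin t, z i p.1 p.2 = 1 ∧ z' j p.1 p.2 = 1)).ConnectedComponent := by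
  have := card_sub_finrank_span_le_card_connectedComponent (K := ZMod P)
    (fun i => Function.uncurry (z i)) (fun j => Function.uncurry (z' j))
    (fun p => hsum p.1 p.2) (fun p => hsum' p.1 p.2)
  rwa [Fintype.card_fin, ← two_mul] at this
end

section
/- For every t ≥ 2 and every even r ≥ 2, there exist N = C((tr-2)/2, r-1) · 2^{r-1} matchings of size t in an r-uniform hypergraph on tr vertices which admit no rainbow matching of size t. -/
/-!
Split the `tr - 2` ordinary vertices into pairs `{x, x'}` and index the matchings by the partial
transversals `X` of size `r - 1` (at most one vertex from each pair): `M_X` consists of `X ∪ {a}`,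
its mirror image `X' ∪ {a'}`, and `t - 2` unions of `r / 2` whole pairs. A rainbow matching of size
`t` covers all `tr` vertices. If its edges through `a` and `a'` are `X ∪ {a}` and `Y' ∪ {a'}`, then
for `x ∈ X` the partner `x'` is covered, but not by a union of whole pairs (that edge would meet
`X ∪ {a}` in `x`), so `x' ∈ Y'`. Hence `X ⊆ Y`, so `X = Y`, and both edges come from one matching.
-/

open Finset Function

section RainbowFree

variable {α β ι ι' : Type*}

def IsRainbowFreeFamily (t r : ℕ) (M : ι → Finset (Finset α)) : Prop :=
  (∀ j, #(M j) = t) ∧ (∀ j, ∀ e ∈ M j, #e = r) ∧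
    (∀ j, ∀ e ∈ M j, ∀ f ∈ M j, e ≠ f → Disjoint e f) ∧
    ¬ ∃ (i : Fin t → ι) (e : Fin t → Finset α),
      Injective i ∧ (∀ k, e k ∈ M (i k)) ∧ ∀ k l, k ≠ l → Disjoint (e k) (e l)

theorem IsRainbowFreeFamily.relabel [DecidableEq β] {t r : ℕ} {M : ι → Finset (Finset α)}
    (hM : IsRainbowFreeFamily t r M) (f : α ≃ β) (σ : ι' ≃ ι) :
    IsRainbowFreeFamily t r fun j => (M (σ j)).map (mapEmbedding f.toEmbedding).toEmbedding := by
  obtain ⟨hcard, hedge, hdisj, hfree⟩ := hM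
  refine ⟨fun j => by simp [hcard], ?_, ?_, ?_⟩
  · intro j e he
    obtain ⟨e, he', rfl⟩ := mem_map.1 he
    simp [hedge _ e he']
  · intro j e he e' he' hne
    obtain ⟨e, hmem, rfl⟩ := mem_map.1 he
    obtain ⟨e', hmem', rfl⟩ := mem_map.1 he'
    simpa using hdisj _ e hmem e' hmem' (ne_of_apply_ne _ hne)
  · rintro ⟨i, e, hi, hmem, hdisj'⟩
    refine hfree ⟨σ ∘ i, fun k => (e k).map f.symm.toEmbedding, σ.injective.comp hi, ?_, ?_⟩
    · intro k
      obtain ⟨e', he', hk⟩ := mem_map.1 (hmem k)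
      simpa [← hk, map_map] using he'
    · intro k l hkl
      simpa using hdisj' k l hkl

theorem exists_mem_of_pairwise_disjoint_of_sum_card [Fintype α] [DecidableEq α] [Fintype ι]
    {e : ι → Finset α} (hdisj : Pairwise (Disjoint on e))
    (hcard : ∑ k, #(e k) = Fintype.card α) (v : α) : ∃ k, v ∈ e k := by
  have hcover : univ.biUnion e = univ :=
    eq_univ_of_card _ (by rwa [card_biUnion fun k _ l _ hkl => hdisj hkl])
  simpa using (hcover.symm ▸ mem_univ v : v ∈ univ.biUnion e)

end RainbowFree

namespace RainbowConstruction

variable {β : Type*} {T q : ℕ} {S B G : Finset β} {p : β} {b c c' : Bool}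

/-- The pair `{x, x'}` of the construction is `(p, false), (p, true)`, and `a, a'` are
`inr false, inr true`. A transversal `X` is encoded by the set `S` of pairs it meets and the set
`B ⊆ S` of pairs where it takes `(p, true)`: then `sideEdge S B false = X ∪ {a}` and
`sideEdge S B true = X' ∪ {a'}`. -/
abbrev Vertex (β : Type*) := β × Bool ⊕ Bool

def blockEdge (G : Finset β) : Finset (Vertex β) :=
  (G ×ˢ univ).map .inl

@[simp] theorem inl_mem_blockEdge : .inl (p, b) ∈ blockEdge G ↔ p ∈ G := by
  simp [blockEdge]

@[simp] theorem inr_notMem_blockEdge : .inr c ∉ blockEdge G := by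
  simp [blockEdge]

theorem card_blockEdge : #(blockEdge G) = 2 * #G := by
  simp [blockEdge, mul_comm]

theorem disjoint_blockEdge {G' : Finset β} (h : Disjoint G G') :
    Disjoint (blockEdge G) (blockEdge G') := by
  rw [disjoint_left]
  rintro (⟨p, b⟩ | c) <;> simp +contextual [disjoint_left.1 h]

structure IsBlockSystem (S : Finset β) (q : ℕ) (G : Fin T → Finset β) : Prop where
  disjoint : ∀ k, Disjoint S (G k)
  card_eq : ∀ k, #(G k) = q
  pairwise_disjoint : Pairwise (Disjoint on G)

section DecidableEq

variable [DecidableEq β]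

def sideEdge (S B : Finset β) (c : Bool) : Finset (Vertex β) :=
  insert (.inr c) (S.image fun p => .inl (p, c ^^ decide (p ∈ B)))

def matching (S B : Finset β) (G : Fin T → Finset β) : Finset (Finset (Vertex β)) :=
  insert (sideEdge S B false) (insert (sideEdge S B true) (univ.image fun k => blockEdge (G k)))

@[simp] theorem inl_mem_sideEdge :
    .inl (p, b) ∈ sideEdge S B c ↔ p ∈ S ∧ b = (c ^^ decide (p ∈ B)) := by
  simp [sideEdge, eq_comm]

@[simp] theorem inr_mem_sideEdge : .inr c' ∈ sideEdge S B c ↔ c' = c := by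
  simp [sideEdge]

theorem card_sideEdge : #(sideEdge S B c) = #S + 1 := by
  rw [sideEdge, card_insert_of_notMem (by simp), card_image_of_injective]
  exact fun p p' h => (Prod.mk.inj (Sum.inl_injective h)).1

theorem disjoint_sideEdge_false_true : Disjoint (sideEdge S B false) (sideEdge S B true) := by
  rw [disjoint_left]
  rintro (⟨p, b⟩ | c) <;> simp +contextual

theorem disjoint_sideEdge_blockEdge (h : Disjoint S G) :
    Disjoint (sideEdge S B c) (blockEdge G) := by
  rw [disjoint_left]
  rintro (⟨p, b⟩ | c) <;> simp +contextual [disjoint_left.1 h]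

variable {G : Fin T → Finset β}

theorem mem_matching {e : Finset (Vertex β)} :
    e ∈ matching S B G ↔
      e = sideEdge S B false ∨ e = sideEdge S B true ∨ ∃ k, e = blockEdge (G k) := by
  simp [matching, eq_comm]

theorem matching_pairwise_disjoint (hG : IsBlockSystem S q G) :
    ∀ e ∈ matching S B G, ∀ f ∈ matching S B G, e ≠ f → Disjoint e f := by
  intro e he f hf hne
  rcases mem_matching.1 he with rfl | rfl | ⟨k, rfl⟩ <;>
    rcases mem_matching.1 hf with rfl | rfl | ⟨l, rfl⟩
  · exact absurd rfl hne
  · exact disjoint_sideEdge_false_true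
  · exact disjoint_sideEdge_blockEdge (hG.disjoint l)
  · exact disjoint_sideEdge_false_true.symm
  · exact absurd rfl hne
  · exact disjoint_sideEdge_blockEdge (hG.disjoint l)
  · exact (disjoint_sideEdge_blockEdge (hG.disjoint k)).symm
  · exact (disjoint_sideEdge_blockEdge (hG.disjoint k)).symm
  · exact disjoint_blockEdge (hG.pairwise_disjoint fun h => hne (h ▸ rfl))

theorem card_mem_matching (hG : IsBlockSystem S q G) (hS : #S + 1 = 2 * q) :
    ∀ e ∈ matching S B G, #e = 2 * q := by
  intro e he
  rcases mem_matching.1 he with rfl | rfl | ⟨k, rfl⟩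
  · rw [card_sideEdge, hS]
  · rw [card_sideEdge, hS]
  · rw [card_blockEdge, hG.card_eq]

theorem card_matching (hG : IsBlockSystem S q G) (hq : 0 < q) : #(matching S B G) = T + 2 := by
  have hblock_inj : Injective fun k => blockEdge (G k) := by
    intro k l (hkl : blockEdge (G k) = blockEdge (G l))
    by_contra hne
    obtain ⟨p, hp⟩ := card_pos.1 ((hG.card_eq k).symm ▸ hq)
    have hpk : .inl (p, true) ∈ blockEdge (G k) := inl_mem_blockEdge.2 hp
    have hpl : .inl (p, true) ∈ blockEdge (G l) := hkl ▸ hpk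
    exact disjoint_left.1 (disjoint_blockEdge (hG.pairwise_disjoint hne)) hpk hpl
  rw [matching, card_insert_of_notMem, card_insert_of_notMem,
    card_image_of_injective _ hblock_inj]
  · simp
  · simp [Finset.ext_iff]
  · simp [Finset.ext_iff]

theorem eq_of_sideEdge_eq {S' B' : Finset β} (hB : B ⊆ S) (hB' : B' ⊆ S')
    (h : sideEdge S B c = sideEdge S' B' c) : S = S' ∧ B = B' := by
  have key : ∀ p, (p ∈ S ↔ p ∈ S') ∧ (p ∈ B ↔ p ∈ B') := by
    intro p
    have htrue := Finset.ext_iff.1 h (.inl (p, true))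
    have hfalse := Finset.ext_iff.1 h (.inl (p, false))
    have := @hB p
    have := @hB' p
    simp only [inl_mem_sideEdge] at htrue hfalse
    cases c <;> by_cases p ∈ B <;> by_cases p ∈ B' <;> simp_all
  exact ⟨Finset.ext fun p => (key p).1, Finset.ext fun p => (key p).2⟩

theorem eq_sideEdge_of_inr_mem {e : Finset (Vertex β)} (he : e ∈ matching S B G)
    (hc : .inr c ∈ e) : e = sideEdge S B c := by
  rcases mem_matching.1 he with rfl | rfl | ⟨k, rfl⟩ <;> cases c <;> simp_all

theorem inl_mem_of_mem_matching {e : Finset (Vertex β)} (he : e ∈ matching S B G)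
    (hinr : ∀ c, .inr c ∉ e) (hp : .inl (p, b) ∈ e) (b' : Bool) : .inl (p, b') ∈ e := by
  rcases mem_matching.1 he with rfl | rfl | ⟨k, rfl⟩
  · exact absurd (inr_mem_sideEdge.2 rfl) (hinr false)
  · exact absurd (inr_mem_sideEdge.2 rfl) (hinr true)
  · simpa using hp

theorem inl_bnot_mem_sideEdge_true_iff :
    .inl (p, !b) ∈ sideEdge S B true ↔ .inl (p, b) ∈ sideEdge S B false := by
  cases b <;> simp

theorem not_exists_rainbow_matching [Fintype β] {ι : Type*} {S B : ι → Finset β}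
    {G : ι → Fin T → Finset β} (hG : ∀ x, IsBlockSystem (S x) q (G x)) (hB : ∀ x, B x ⊆ S x)
    (hS : ∀ x, #(S x) + 1 = 2 * q) (hinj : ∀ x y, S x = S y → B x = B y → x = y)
    (hβ : Fintype.card β + 1 = (T + 2) * q) :
    ¬ ∃ (i : Fin (T + 2) → ι) (e : Fin (T + 2) → Finset (Vertex β)), Injective i ∧
      (∀ k, e k ∈ matching (S (i k)) (B (i k)) (G (i k))) ∧
      ∀ k l, k ≠ l → Disjoint (e k) (e l) := by
  rintro ⟨i, e, hi, he, hdisj⟩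
  have hcover : ∀ v, ∃ k, v ∈ e k := by
    refine exists_mem_of_pairwise_disjoint_of_sum_card (fun k l hkl => hdisj k l hkl) ?_
    simp only [card_mem_matching (hG _) (hS _) _ (he _), sum_const, card_univ, Fintype.card_fin,
      smul_eq_mul, Fintype.card_sum, Fintype.card_prod, Fintype.card_bool]
    linarith
  obtain ⟨k0, hk0⟩ := hcover (.inr false)
  obtain ⟨k1, hk1⟩ := hcover (.inr true)
  have he0 := eq_sideEdge_of_inr_mem (he k0) hk0
  have he1 := eq_sideEdge_of_inr_mem (he k1) hk1
  have hk01 : k0 ≠ k1 := by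
    rintro rfl
    simp [he0] at hk1
  -- a block edge through the partner `(p, !b)` would also contain `(p, b) ∈ e k0`
  have hsub : e k0 ⊆ sideEdge (S (i k1)) (B (i k1)) false := by
    rintro (⟨p, b⟩ | c) hv
    · obtain ⟨k, hk⟩ := hcover (.inl (p, !b))
      suffices k = k1 by rwa [this, he1, inl_bnot_mem_sideEdge_true_iff] at hk
      by_contra hkk1
      have hkk0 : k ≠ k0 := by
        rintro rfl
        rw [he0] at hv hk
        cases b <;> simp_all
      have hinr : ∀ c, .inr c ∉ e k := by
        rintro (_ | _) hc
        · exact disjoint_left.1 (hdisj k k0 hkk0) hc hk0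
        · exact disjoint_left.1 (hdisj k k1 hkk1) hc hk1
      exact disjoint_left.1 (hdisj k k0 hkk0) (inl_mem_of_mem_matching (he k) hinr hk b) hv
    · rw [he0, inr_mem_sideEdge] at hv
      simp [hv]
  have heq : e k0 = sideEdge (S (i k1)) (B (i k1)) false :=
    eq_of_subset_of_card_le hsub (by rw [he0, card_sideEdge, card_sideEdge, hS, hS])
  obtain ⟨hS01, hB01⟩ := eq_of_sideEdge_eq (hB _) (hB _) (he0.symm.trans heq)
  exact hk01 (hi (hinj _ _ hS01 hB01))

theorem exists_isBlockSystem [Fintype β] (S : Finset β) (h : #Sᶜ = T * q) :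
    ∃ G : Fin T → Finset β, IsBlockSystem S q G := by
  let g : Fin T × Fin q ↪ β :=
    (finProdFinEquiv.trans (Sᶜ.equivFinOfCardEq h).symm).toEmbedding.trans (.subtype _)
  have hg : ∀ x, g x ∈ Sᶜ := fun x => Subtype.prop _
  refine ⟨fun k => univ.map ((Embedding.sectR k (Fin q)).trans g), ⟨?_, ?_, ?_⟩⟩
  · intro k
    rw [disjoint_left]
    intro p hpS hpG
    obtain ⟨m, -, rfl⟩ := mem_map.1 hpG
    exact mem_compl.1 (hg _) hpS
  · simp
  · intro k l hkl
    rw [onFun, disjoint_left]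
    intro p hpk hpl
    obtain ⟨m, -, rfl⟩ := mem_map.1 hpk
    obtain ⟨m', -, hm'⟩ := mem_map.1 hpl
    exact hkl (Prod.ext_iff.1 (g.injective hm')).1.symm

end DecidableEq

def indexSet (β : Type*) [Fintype β] (s : ℕ) : Finset (Σ _ : Finset β, Finset β) :=
  (powersetCard s univ).sigma powerset

theorem card_indexSet [Fintype β] (s : ℕ) :
    #(indexSet β s) = (Fintype.card β).choose s * 2 ^ s := by
  rw [indexSet, card_sigma,
    sum_congr rfl fun S hS => by rw [card_powerset, (mem_powersetCard.1 hS).2],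
    sum_const, card_powersetCard, card_univ, smul_eq_mul]

theorem exists_isRainbowFreeFamily [Fintype β] [DecidableEq β] (T q : ℕ) (hq : 0 < q)
    (hβ : Fintype.card β + 1 = (T + 2) * q) :
    ∃ M : indexSet β (2 * q - 1) → Finset (Finset (Vertex β)),
      IsRainbowFreeFamily (T + 2) (2 * q) M := by
  have hS : ∀ x : indexSet β (2 * q - 1), #x.1.1 = 2 * q - 1 := fun x =>
    (mem_powersetCard.1 (mem_sigma.1 x.2).1).2
  have hB : ∀ x : indexSet β (2 * q - 1), x.1.2 ⊆ x.1.1 := fun x =>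
    mem_powerset.1 (mem_sigma.1 x.2).2
  have hblocks : ∀ x : indexSet β (2 * q - 1), ∃ G : Fin T → Finset β, IsBlockSystem x.1.1 q G :=
    fun x => exists_isBlockSystem _ (by rw [card_compl, hS]; rw [add_mul] at hβ; omega)
  choose G hG using hblocks
  have hS' : ∀ x : indexSet β (2 * q - 1), #x.1.1 + 1 = 2 * q := fun x => by
    have := hS x
    omega
  refine ⟨fun x => matching x.1.1 x.1.2 (G x), ?_, ?_, ?_, ?_⟩
  · exact fun x => card_matching (hG x) hq
  · exact fun x => card_mem_matching (hG x) (hS' x)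
  · exact fun x => matching_pairwise_disjoint (hG x)
  · have hinj : ∀ x y : indexSet β (2 * q - 1), x.1.1 = y.1.1 → x.1.2 = y.1.2 → x = y :=
      fun x y hS hB => Subtype.ext (Sigma.ext hS (heq_of_eq hB))
    exact not_exists_rainbow_matching (ι := indexSet β (2 * q - 1)) (S := fun x => x.1.1)
      (B := fun x => x.1.2) (G := G) hG hB hS' hinj hβ

end RainbowConstruction

open RainbowConstruction in
theorem stmt13 (t r : ℕ) (ht : 2 ≤ t) (hr : 2 ≤ r) (hre : Even r) :
    ∃ M : Fin (Nat.choose ((t * r - 2) / 2) (r - 1) * 2 ^ (r - 1)) →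
        Finset (Finset (Fin (t * r))),
      (∀ j, (M j).card = t) ∧
      (∀ j, ∀ e ∈ M j, e.card = r) ∧
      (∀ j, ∀ e ∈ M j, ∀ f ∈ M j, e ≠ f → Disjoint e f) ∧
      ¬ ∃ (i : Fin t → Fin (Nat.choose ((t * r - 2) / 2) (r - 1) * 2 ^ (r - 1)))
          (e : Fin t → Finset (Fin (t * r))),
        Function.Injective i ∧ (∀ k, e k ∈ M (i k)) ∧
        ∀ k l, k ≠ l → Disjoint (e k) (e l) := by
  obtain ⟨q, rfl⟩ := hre
  obtain ⟨T, rfl⟩ : ∃ T, t = T + 2 := ⟨t - 2, by omega⟩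
  have hq : 0 < q := by omega
  rw [← two_mul]
  have hP : ((T + 2) * (2 * q) - 2) / 2 + 1 = (T + 2) * q := by
    have : 0 < (T + 2) * q := Nat.mul_pos (by omega) hq
    rw [mul_left_comm]
    omega
  set P := ((T + 2) * (2 * q) - 2) / 2
  obtain ⟨M, hM⟩ :=
    exists_isRainbowFreeFamily (β := Fin P) T q hq (by rw [Fintype.card_fin, hP])
  have hV : Fintype.card (Vertex (Fin P)) = (T + 2) * (2 * q) := by
    simp only [Fintype.card_sum, Fintype.card_prod, Fintype.card_fin, Fintype.card_bool]
    linarith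
  have hI : #(indexSet (Fin P) (2 * q - 1)) = P.choose (2 * q - 1) * 2 ^ (2 * q - 1) := by
    rw [card_indexSet, Fintype.card_fin]
  exact ⟨_, hM.relabel (Fintype.equivFinOfCardEq hV) (Finset.equivFinOfCardEq hI).symm⟩
end

section
/- For every t ≥ 2 and every odd r ≥ 3, there exist N = (t(t-1))^{(r-1)/2} matchings of size t in an r-partite r-uniform hypergraph on tr vertices (with parts of size t) which admit no rainbow matching of size t. -/
abbrev Dt (s : ℕ) : Type := {p : Fin (s+2) × Fin (s+2) // p.1 ≠ p.2}

noncomputable def eD {s : ℕ} (d : Dt s) : Equiv.Perm (Fin (s+2)) :=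
  Equiv.swap 0 d.1.1 * Equiv.swap 1 (Equiv.swap 0 d.1.1 d.1.2)

lemma eD_zero {s : ℕ} (d : Dt s) : eD d 0 = d.1.1 := by
  have h1 : (0 : Fin (s+2)) ≠ 1 := by simp [Fin.ext_iff]
  have h2 : (0 : Fin (s+2)) ≠ Equiv.swap 0 d.1.1 d.1.2 := by
    intro h
    have := congrArg (Equiv.swap 0 d.1.1) h
    rw [Equiv.swap_apply_left, Equiv.swap_apply_self] at this
    exact d.2 this
  simp only [eD, Equiv.Perm.mul_apply]
  rw [Equiv.swap_apply_of_ne_of_ne h1 h2, Equiv.swap_apply_left]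

lemma eD_one {s : ℕ} (d : Dt s) : eD d 1 = d.1.2 := by
  simp only [eD, Equiv.Perm.mul_apply, Equiv.swap_apply_left, Equiv.swap_apply_self]

noncomputable def edV {s m : ℕ} (x : Fin m → Dt s) (a : Fin (s+2)) (k : Fin (2*m+1)) : Fin (s+2) :=
  if h : (k : ℕ) = 2*m then a
  else if (k:ℕ) % 2 = 0 then eD (x ⟨(k:ℕ)/2, by have := k.isLt; omega⟩) a
  else eD (x ⟨(k:ℕ)/2, by have := k.isLt; omega⟩) (Equiv.swap 0 1 a)

lemma edV_inj {s m : ℕ} (x : Fin m → Dt s) (k : Fin (2*m+1)) :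
    Function.Injective (fun a => edV x a k) := by
  intro a b hab
  unfold edV at hab
  dsimp only at hab
  split_ifs at hab with h1 h2
  · exact hab
  · exact (eD _).injective hab
  · exact (Equiv.swap 0 1).injective ((eD _).injective hab)

lemma edV_last {s m : ℕ} (x : Fin m → Dt s) (a : Fin (s+2)) :
    edV x a ⟨2*m, by omega⟩ = a := by simp [edV]

lemma edV_even {s m : ℕ} (x : Fin m → Dt s) (a : Fin (s+2)) (p : Fin m) :
    edV x a ⟨2*(p:ℕ), by have := p.isLt; omega⟩ = eD (x p) a := by
  have h1 : ¬(2*(p:ℕ) = 2*m) := by have := p.isLt; omega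
  have h2 : (2*(p:ℕ)) % 2 = 0 := by omega
  have h3 : (2*(p:ℕ))/2 = (p:ℕ) := by omega
  simp only [edV, h1, dif_neg, h2, if_pos, not_false_iff, h3, Fin.eta]

lemma edV_odd {s m : ℕ} (x : Fin m → Dt s) (a : Fin (s+2)) (p : Fin m) :
    edV x a ⟨2*(p:ℕ)+1, by have := p.isLt; omega⟩ = eD (x p) (Equiv.swap 0 1 a) := by
  have h1 : ¬(2*(p:ℕ)+1 = 2*m) := by omega
  have h2 : ¬((2*(p:ℕ)+1) % 2 = 0) := by omega
  have h3 : (2*(p:ℕ)+1)/2 = (p:ℕ) := by omega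
  simp only [edV, h1, dif_neg, h2, if_neg, not_false_iff, h3, Fin.eta]

noncomputable def edge {s m : ℕ} (x : Fin m → Dt s) (a : Fin (s+2)) :
    Finset (Fin (2*m+1) × Fin (s+2)) :=
  Finset.univ.image (fun k => (k, edV x a k))

lemma mem_edge {s m : ℕ} {x : Fin m → Dt s} {a : Fin (s+2)}
    {w : Fin (2*m+1) × Fin (s+2)} : w ∈ edge x a ↔ w.2 = edV x a w.1 := by
  simp only [edge, Finset.mem_image, Finset.mem_univ, true_and]
  constructor
  · rintro ⟨k, rfl⟩; rfl
  · intro h; exact ⟨w.1, by rw [Prod.ext_iff]; exact ⟨rfl, h.symm⟩⟩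

lemma card_edge {s m : ℕ} (x : Fin m → Dt s) (a : Fin (s+2)) :
    (edge x a).card = 2*m+1 := by
  rw [edge, Finset.card_image_of_injective _ (fun k k' h => congrArg Prod.fst h)]
  simp

lemma last_mem_edge {s m : ℕ} (x : Fin m → Dt s) (a : Fin (s+2)) :
    ((⟨2*m, by omega⟩ : Fin (2*m+1)), a) ∈ edge x a := by
  rw [mem_edge]; exact (edV_last x a).symm

lemma edge_inj {s m : ℕ} (x : Fin m → Dt s) : Function.Injective (edge x) := by
  intro a b hab
  have := last_mem_edge x a
  rw [hab, mem_edge] at this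
  simpa [edV_last] using this

noncomputable def matching {s m : ℕ} (x : Fin m → Dt s) :
    Finset (Finset (Fin (2*m+1) × Fin (s+2))) :=
  Finset.univ.image (fun a => edge x a)

lemma card_matching {s m : ℕ} (x : Fin m → Dt s) : (matching x).card = s + 2 := by
  rw [matching, Finset.card_image_of_injective _ (edge_inj x)]
  simp

lemma mem_matching {s m : ℕ} {x : Fin m → Dt s} {e : Finset (Fin (2*m+1) × Fin (s+2))} :
    e ∈ matching x ↔ ∃ a, e = edge x a := by
  simp only [matching, Finset.mem_image, Finset.mem_univ, true_and]
  exact ⟨fun ⟨a, h⟩ => ⟨a, h.symm⟩, fun ⟨a, h⟩ => ⟨a, h.symm⟩⟩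

lemma edge_disjoint {s m : ℕ} (x : Fin m → Dt s) {a b : Fin (s+2)} (hab : a ≠ b) :
    Disjoint (edge x a) (edge x b) := by
  rw [Finset.disjoint_left]
  intro w hwa hwb
  rw [mem_edge] at hwa hwb
  exact hab (edV_inj x w.1 (hwa.symm.trans hwb))

lemma key {n : ℕ} {α β : Fin n → Fin n} (hα : Function.Surjective α)
    (hβ : Function.Injective β) {k0 k1 : Fin n}
    (heq : ∀ k, k ≠ k0 → k ≠ k1 → α k = β k)
    (h0 : α k0 ≠ β k0) (h1 : α k1 ≠ β k1) :
    β k0 = α k1 ∧ β k1 = α k0 := by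
  constructor
  · obtain ⟨k, hk⟩ := hα (β k0)
    rcases eq_or_ne k k0 with rfl | hkk0
    · exact absurd hk h0
    rcases eq_or_ne k k1 with rfl | hkk1
    · exact hk.symm
    · have hb : β k = β k0 := by rw [← heq k hkk0 hkk1, hk]
      exact absurd (hβ hb) hkk0
  · obtain ⟨k, hk⟩ := hα (β k1)
    rcases eq_or_ne k k1 with rfl | hkk1
    · exact absurd hk h1
    rcases eq_or_ne k k0 with rfl | hkk0
    · exact hk.symm
    · have hb : β k = β k1 := by rw [← heq k hkk0 hkk1, hk]
      exact absurd (hβ hb) hkk1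

lemma card_Dt (s : ℕ) : Fintype.card (Dt s) = (s+2) * (s+2-1) := by
  have e2 : {p : Fin (s+2) × Fin (s+2) // p.1 = p.2} ≃ Fin (s+2) :=
    ⟨fun p => p.1.1, fun a => ⟨(a, a), rfl⟩,
     fun p => by rcases p with ⟨⟨a, b⟩, h⟩; cases h; rfl, fun a => rfl⟩
  have h1 : Fintype.card {p : Fin (s+2) × Fin (s+2) // p.1 = p.2} = s + 2 := by
    rw [Fintype.card_congr e2, Fintype.card_fin]
  have h2 := Fintype.card_subtype_compl (fun p : Fin (s+2) × Fin (s+2) => p.1 = p.2)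
  have h3 : Fintype.card (Dt s) =
      Fintype.card {p : Fin (s+2) × Fin (s+2) // ¬ p.1 = p.2} := rfl
  rw [h3, h2, h1, Fintype.card_prod, Fintype.card_fin]
  have : (s+2) * (s+2) = (s+2) * (s+2-1) + (s+2) := by
    have : s + 2 - 1 = s + 1 := by omega
    rw [this]; ring
  omega

theorem stmt14 (t r : ℕ) (ht : 2 ≤ t) (hr : 3 ≤ r) (hro : Odd r) :
    ∃ M : Fin ((t * (t - 1)) ^ ((r - 1) / 2)) → Finset (Finset (Fin r × Fin t)),
      (∀ j, (M j).card = t) ∧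
      (∀ j, ∀ e ∈ M j, e.card = r ∧ ∀ k : Fin r, ∃! v, v ∈ e ∧ v.1 = k) ∧
      (∀ j, ∀ e ∈ M j, ∀ f ∈ M j, e ≠ f → Disjoint e f) ∧
      ¬ ∃ (i : Fin t → Fin ((t * (t - 1)) ^ ((r - 1) / 2)))
          (e : Fin t → Finset (Fin r × Fin t)),
        Function.Injective i ∧ (∀ k, e k ∈ M (i k)) ∧
        ∀ k l, k ≠ l → Disjoint (e k) (e l) := by
  obtain ⟨s, rfl⟩ : ∃ s, t = s + 2 := ⟨t - 2, by omega⟩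
  obtain ⟨m, rfl⟩ := hro
  rw [show (2*m+1 - 1)/2 = m from by omega]
  have hcard : Fintype.card (Fin m → Dt s) = ((s+2) * (s+2-1)) ^ m := by
    rw [Fintype.card_fun, card_Dt, Fintype.card_fin]
  let φ : (Fin m → Dt s) ≃ Fin (((s+2) * (s+2-1)) ^ m) :=
    Fintype.equivFinOfCardEq hcard
  refine ⟨fun j => matching (φ.symm j), fun j => card_matching _, ?_, ?_, ?_⟩
  · -- edges: card and partite
    intro j e he
    obtain ⟨a, rfl⟩ := mem_matching.mp he
    refine ⟨card_edge _ _, fun k => ?_⟩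
    refine ⟨(k, edV (φ.symm j) a k), ⟨mem_edge.mpr rfl, rfl⟩, ?_⟩
    rintro ⟨k', w⟩ ⟨hw, h1⟩
    dsimp only at h1
    subst h1
    rw [mem_edge] at hw
    dsimp only at hw
    subst hw
    rfl
  · -- within-matching disjointness
    intro j e he f hf hef
    obtain ⟨a, rfl⟩ := mem_matching.mp he
    obtain ⟨b, rfl⟩ := mem_matching.mp hf
    exact edge_disjoint _ (fun h => hef (by rw [h]))
  · -- no rainbow matching
    rintro ⟨i, e, hinj, hmem, hdis⟩
    choose a ha using fun k => mem_matching.mp (hmem k)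
    have hainj : Function.Injective a := by
      intro k k' h
      by_contra hne
      have h1 : ((⟨2*m, by omega⟩ : Fin (2*m+1)), a k) ∈ e k := by
        rw [ha k]; exact last_mem_edge _ _
      have h2 : ((⟨2*m, by omega⟩ : Fin (2*m+1)), a k) ∈ e k' := by
        rw [ha k', h]; exact last_mem_edge _ _
      exact Finset.disjoint_left.mp (hdis k k' hne) h1 h2
    have hasurj := Finite.injective_iff_surjective.mp hainj
    obtain ⟨k0, hk0⟩ := hasurj 0
    obtain ⟨k1, hk1⟩ := hasurj 1
    have hk01 : k0 ≠ k1 := by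
      intro h
      rw [h, hk1] at hk0
      exact absurd hk0 (by simp [Fin.ext_iff])
    have hx : φ.symm (i k0) = φ.symm (i k1) := by
      funext p
      have hpE : 2*(p:ℕ) < 2*m+1 := by have := p.isLt; omega
      have hpO : 2*(p:ℕ)+1 < 2*m+1 := by have := p.isLt; omega
      set α : Fin (s+2) → Fin (s+2) :=
        fun k => edV (φ.symm (i k)) (a k) ⟨2*(p:ℕ), hpE⟩ with hαdef
      set β : Fin (s+2) → Fin (s+2) :=
        fun k => edV (φ.symm (i k)) (a k) ⟨2*(p:ℕ)+1, hpO⟩ with hβdef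
      have hαeval : ∀ k, α k = eD (φ.symm (i k) p) (a k) :=
        fun k => edV_even _ _ p
      have hβeval : ∀ k, β k = eD (φ.symm (i k) p) (Equiv.swap 0 1 (a k)) :=
        fun k => edV_odd _ _ p
      have hmemα : ∀ k, ((⟨2*(p:ℕ), hpE⟩ : Fin (2*m+1)), α k) ∈ e k :=
        fun k => by rw [ha k]; exact mem_edge.mpr rfl
      have hmemβ : ∀ k, ((⟨2*(p:ℕ)+1, hpO⟩ : Fin (2*m+1)), β k) ∈ e k :=
        fun k => by rw [ha k]; exact mem_edge.mpr rfl
      have hαinj : Function.Injective α := by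
        intro k k' h
        by_contra hne
        have := hmemα k'
        rw [← h] at this
        exact Finset.disjoint_left.mp (hdis k k' hne) (hmemα k) this
      have hβinj : Function.Injective β := by
        intro k k' h
        by_contra hne
        have := hmemβ k'
        rw [← h] at this
        exact Finset.disjoint_left.mp (hdis k k' hne) (hmemβ k) this
      have hαsurj := Finite.injective_iff_surjective.mp hαinj
      have heq : ∀ k, k ≠ k0 → k ≠ k1 → α k = β k := by
        intro k hk0' hk1'
        have ha0 : a k ≠ 0 := fun h => hk0' (hainj (h.trans hk0.symm))
        have ha1 : a k ≠ 1 := fun h => hk1' (hainj (h.trans hk1.symm))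
        rw [hαeval, hβeval, Equiv.swap_apply_of_ne_of_ne ha0 ha1]
      have h0 : α k0 ≠ β k0 := by
        rw [hαeval, hβeval, hk0, Equiv.swap_apply_left, eD_zero, eD_one]
        exact (φ.symm (i k0) p).2
      have h1 : α k1 ≠ β k1 := by
        rw [hαeval, hβeval, hk1, Equiv.swap_apply_right, eD_one, eD_zero]
        exact Ne.symm (φ.symm (i k1) p).2
      obtain ⟨hv, hu⟩ := key hαsurj hβinj heq h0 h1
      rw [hαeval, hβeval, hk0, hk1, Equiv.swap_apply_left, eD_one, eD_one] at hv
      rw [hαeval, hβeval, hk0, hk1, Equiv.swap_apply_right, eD_zero, eD_zero] at hu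
      exact Subtype.ext (Prod.ext hu.symm hv)
    exact hk01 (hinj (φ.symm.injective hx))
end

section
/- Let r ≥ 2, t ≥ 2, and suppose M_1, ..., M_N are matchings of size t in an r-partite r-uniform hypergraph with N > (t-1)·t^r. Then there exists a rainbow matching of size t: distinct indices j_1,...,j_t and pairwise disjoint edges e_1 ∈ M_{j_1}, ..., e_t ∈ M_{j_t}. -/
open Finset

/-! Auxiliary: signed indicator of a function being a permutation. -/

noncomputable def sgnFun (t : ℕ) (σ : Fin t → Fin t) : ℚ :=
  if h : Function.Bijective σ then ((Equiv.Perm.sign (Equiv.ofBijective σ h) : ℤ) : ℚ) else 0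

/-- The multilinear form on `(Fin r → Fin t) → ℚ` (the "tensor space" of dimension `t^r`)
whose value on decomposable tensors is the product of determinants. -/
noncomputable def Fm (r t : ℕ) :
    MultilinearMap ℚ (fun _ : Fin t => ((Fin r → Fin t) → ℚ)) ℚ :=
  ∑ κ : Fin t → (Fin r → Fin t),
    (∏ i : Fin r, sgnFun t (fun s => κ s i)) •
      ((MultilinearMap.mkPiAlgebra ℚ (Fin t) ℚ).compLinearMap
        (fun s => LinearMap.proj (κ s)))

lemma Fm_apply (r t : ℕ) (x : Fin t → ((Fin r → Fin t) → ℚ)) :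
    Fm r t x = ∑ κ : Fin t → (Fin r → Fin t),
      (∏ i : Fin r, sgnFun t (fun s => κ s i)) * ∏ s : Fin t, x s (κ s) := by
  simp [Fm, MultilinearMap.sum_apply, MultilinearMap.smul_apply, smul_eq_mul]

lemma sgn_sum (t : ℕ) (A : Fin t → Fin t → ℚ) :
    ∑ σ : Fin t → Fin t, sgnFun t σ * ∏ s : Fin t, A s (σ s)
      = (Matrix.of fun k s => A s k).det := by
  classical
  have step1 : ∑ σ : Fin t → Fin t, sgnFun t σ * ∏ s : Fin t, A s (σ s)
      = ∑ σ : Fin t → Fin t, ∑ τ : Equiv.Perm (Fin t),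
          (if ⇑τ = σ then Equiv.Perm.sign τ • ∏ i : Fin t, A i (τ i) else 0) := by
    refine Finset.sum_congr rfl fun σ _ => ?_
    by_cases hb : Function.Bijective σ
    · rw [Finset.sum_eq_single (Equiv.ofBijective σ hb)]
      · have hcoe : ⇑(Equiv.ofBijective σ hb) = σ := rfl
        rw [if_pos hcoe, sgnFun, dif_pos hb]
        rcases Int.units_eq_one_or (Equiv.Perm.sign (Equiv.ofBijective σ hb)) with h | h <;>
          rw [h] <;> simp [hcoe]
      · intro τ _ hτ
        rw [if_neg]
        intro hc
        exact hτ (DFunLike.coe_injective hc)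
      · intro h; exact absurd (Finset.mem_univ _) h
    · rw [sgnFun, dif_neg hb, zero_mul]
      symm
      apply Finset.sum_eq_zero
      intro τ _
      rw [if_neg]
      intro h
      exact hb (h ▸ τ.bijective)
  rw [step1, Finset.sum_comm]
  rw [Matrix.det_apply]
  refine Finset.sum_congr rfl fun τ _ => ?_
  rw [Finset.sum_ite_eq Finset.univ (⇑τ)]
  simp [Matrix.of_apply]

lemma Fm_prod_pow (r t : ℕ) (p : Fin t → Fin r → ℚ) :
    Fm r t (fun s k => ∏ i : Fin r, p s i ^ ((k i : ℕ)))
      = ∏ i : Fin r, (Matrix.vandermonde fun s => p s i).det := by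
  classical
  rw [Fm_apply]
  have h1 : ∀ κ : Fin t → Fin r → Fin t,
      (∏ i : Fin r, sgnFun t (fun s => κ s i)) * ∏ s : Fin t, ∏ i : Fin r, p s i ^ ((κ s i : ℕ))
        = ∏ i : Fin r, (sgnFun t (fun s => κ s i) * ∏ s : Fin t, p s i ^ ((κ s i : ℕ))) := by
    intro κ
    rw [Finset.prod_comm (s := Finset.univ) (t := Finset.univ)
      (f := fun s i => p s i ^ ((κ s i : ℕ))), Finset.prod_mul_distrib]
  simp only [h1]
  have h2 : ∑ κ : Fin t → Fin r → Fin t,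
      ∏ i : Fin r, (sgnFun t (fun s => κ s i) * ∏ s : Fin t, p s i ^ ((κ s i : ℕ)))
      = ∑ τf : Fin r → Fin t → Fin t,
      ∏ i : Fin r, (sgnFun t (τf i) * ∏ s : Fin t, p s i ^ ((τf i s : ℕ))) := by
    apply Fintype.sum_equiv (Equiv.piComm (fun (_ : Fin t) (_ : Fin r) => Fin t))
    intro κ; rfl
  rw [h2]
  have h3 : ∑ τf : Fin r → Fin t → Fin t,
      ∏ i : Fin r, (sgnFun t (τf i) * ∏ s : Fin t, p s i ^ ((τf i s : ℕ)))
      = ∏ i : Fin r, ∑ σ : Fin t → Fin t, (sgnFun t σ * ∏ s : Fin t, p s i ^ ((σ s : ℕ))) := by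
    rw [Finset.prod_univ_sum (fun _ : Fin r => (Finset.univ : Finset (Fin t → Fin t)))]
    rw [Fintype.piFinset_univ]
  rw [h3]
  refine Finset.prod_congr rfl ?_
  intro i _
  rw [sgn_sum t (fun s k => p s i ^ ((k : ℕ)))]
  have hof : (Matrix.of fun (k : Fin t) (s : Fin t) => p s i ^ ((k : ℕ)))
      = (Matrix.vandermonde fun s => p s i).transpose := by
    ext k s
    simp [Matrix.vandermonde_apply, Matrix.transpose_apply]
  rw [hof, Matrix.det_transpose]

lemma cons_injective {n : ℕ} {ι : Type*} {b : ι} {h : Fin n → ι}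
    (hne : ∀ s, h s ≠ b) (hinj : Function.Injective h) :
    Function.Injective (Fin.cons b h : Fin (n + 1) → ι) := by
  intro x y e
  induction x using Fin.cases with
  | zero =>
    induction y using Fin.cases with
    | zero => rfl
    | succ y =>
      rw [Fin.cons_zero, Fin.cons_succ] at e
      exact absurd e.symm (hne y)
  | succ x =>
    induction y using Fin.cases with
    | zero =>
      rw [Fin.cons_zero, Fin.cons_succ] at e
      exact absurd e (hne x)
    | succ y =>
      rw [Fin.cons_succ, Fin.cons_succ] at e
      exact congrArg Fin.succ (hinj e)

/-- The multilinear map lemma: if every "rainbow" tuple is killed by every map in `G`,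
but each index has a witness tuple not killed by some map in `G`, then the index set
has cardinality at most `(n-1) · dim D`. -/
lemma rainbow_lemma {D : Type} [AddCommGroup D] [Module ℚ D] [FiniteDimensional ℚ D]
    {ι : Type} [DecidableEq ι] :
    ∀ (n : ℕ) (S : Finset ι) (A : ι → Set D)
      (G : Set (MultilinearMap ℚ (fun _ : Fin n => D) ℚ)),
      (∀ j ∈ S, ∃ f ∈ G, ∃ x : Fin n → D, (∀ s, x s ∈ A j) ∧ f x ≠ 0) →
      (∀ f ∈ G, ∀ g : Fin n → ι, (∀ s, g s ∈ S) → Function.Injective g →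
        ∀ x : Fin n → D, (∀ s, x s ∈ A (g s)) → f x = 0) →
      S.card ≤ (n - 1) * Module.finrank ℚ D := by
  intro n
  induction n with
  | zero =>
    intro S A G hwit hrain
    rcases S.eq_empty_or_nonempty with rfl | ⟨j, hj⟩
    · simp
    obtain ⟨f, hfG, x, hx, hne⟩ := hwit j hj
    exact absurd (hrain f hfG (fun s => s.elim0) (fun s => s.elim0)
      (fun s => s.elim0) x (fun s => s.elim0)) hne
  | succ n ih =>
    intro S A G hwit hrain
    classical
    rcases S.eq_empty_or_nonempty with rfl | ⟨j0, hj0⟩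
    · simp
    choose! F hFG a ha hane using hwit
    rcases Nat.eq_zero_or_pos n with rfl | hn
    · -- arity 1: contradiction
      obtain h0 := hrain (F j0) (hFG j0 hj0) (fun _ => j0) (fun _ => hj0)
        (fun x y _ => Fin.ext (by omega)) (a j0) (fun s => ha j0 hj0 s)
      exact absurd h0 (hane j0 hj0)
    -- main case n ≥ 1
    set d := Module.finrank ℚ D with hd
    set T : Set D := (fun j => a j 0) '' ↑S with hT
    obtain ⟨bs, hbsub, hbspan, hbind⟩ := exists_linearIndependent ℚ T
    have hbfin : bs.Finite := hbind.setFinite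
    haveI : Fintype bs := hbfin.fintype
    have hbcard : bs.toFinset.card ≤ d := by
      rw [Set.toFinset_card]
      exact hbind.fintype_card_le_finrank
    -- choose representatives
    have hch : ∀ v ∈ bs, ∃ j ∈ S, a j 0 = v := by
      intro v hv
      obtain ⟨j, hj, hjv⟩ := hbsub hv
      exact ⟨j, hj, hjv⟩
    let ch : D → ι := fun v => if h : ∃ j ∈ S, a j 0 = v then h.choose else j0
    have hchS : ∀ v ∈ bs, ch v ∈ S ∧ a (ch v) 0 = v := by
      intro v hv
      have h : ∃ j ∈ S, a j 0 = v := hch v hv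
      simp only [ch, dif_pos h]
      exact ⟨h.choose_spec.1, h.choose_spec.2⟩
    set B : Finset ι := bs.toFinset.image ch with hB
    have hBS : B ⊆ S := by
      intro b hb
      obtain ⟨v, hv, rfl⟩ := Finset.mem_image.1 hb
      exact (hchS v (Set.mem_toFinset.1 hv)).1
    have hBcard : B.card ≤ d := le_trans (Finset.card_image_le) hbcard
    -- spanning
    have hspan : ∀ j ∈ S, a j 0 ∈
        Submodule.span ℚ (Set.range fun b : ↥B => a (b : ι) 0) := by
      intro j hj
      have h1 : bs ⊆ Set.range fun b : ↥B => a (b : ι) 0 := by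
        intro v hv
        refine ⟨⟨ch v, Finset.mem_image.2 ⟨v, Set.mem_toFinset.2 hv, rfl⟩⟩, ?_⟩
        exact (hchS v hv).2
      have h2 : a j 0 ∈ Submodule.span ℚ T :=
        Submodule.subset_span ⟨j, hj, rfl⟩
      rw [← hbspan] at h2
      exact Submodule.span_mono h1 h2
    -- new family of maps
    set G' : Set (MultilinearMap ℚ (fun _ : Fin n => D) ℚ) :=
      {h | ∃ f ∈ G, ∃ b : ↥B, h = f.curryLeft (a (b : ι) 0)} with hG'
    have key : (S \ B).card ≤ (n - 1) * d := by
      apply ih (S \ B) A G'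
      · -- witnesses
        intro j hj
        have hjS : j ∈ S := (Finset.mem_sdiff.1 hj).1
        obtain ⟨c, hc⟩ := (Submodule.mem_span_range_iff_exists_fun ℚ).1 (hspan j hjS)
        have hsum : F j (a j) = ∑ b : ↥B, c b • ((F j).curryLeft (a (b : ι) 0) (Fin.tail (a j))) := by
          conv_lhs => rw [← Fin.cons_self_tail (a j), ← hc]
          rw [← MultilinearMap.curryLeft_apply, map_sum]
          rw [MultilinearMap.sum_apply]
          refine Finset.sum_congr rfl ?_
          intro b _
          rw [map_smul, MultilinearMap.smul_apply]
        have : ∃ b : ↥B, (F j).curryLeft (a (b : ι) 0) (Fin.tail (a j)) ≠ 0 := by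
          by_contra hno
          push_neg at hno
          apply hane j hjS
          rw [hsum]
          exact Finset.sum_eq_zero (fun b _ => by rw [hno b, smul_zero])
        obtain ⟨b, hb⟩ := this
        refine ⟨(F j).curryLeft (a (b : ι) 0), ⟨F j, hFG j hjS, b, rfl⟩, Fin.tail (a j), ?_, hb⟩
        intro s
        exact ha j hjS s.succ
      · -- rainbow vanishing
        rintro f' ⟨f, hfG', b, rfl⟩ g hgS hginj x hx
        rw [MultilinearMap.curryLeft_apply]
        have hbS : (b : ι) ∈ S := hBS b.2
        have hgne : ∀ s, g s ≠ (b : ι) := by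
          intro s hs
          have := (Finset.mem_sdiff.1 (hgS s)).2
          rw [hs] at this
          exact this b.2
        refine hrain f hfG' (Fin.cons (b : ι) g) ?_ (cons_injective hgne hginj)
          (Fin.cons (a (b : ι) 0) x) ?_
        · intro s
          induction s using Fin.cases with
          | zero => simpa using hbS
          | succ s => simpa using (Finset.mem_sdiff.1 (hgS s)).1
        · intro s
          induction s using Fin.cases with
          | zero => simpa using ha (b : ι) hbS 0
          | succ s => simpa using hx s
    have hcards : (S \ B).card + B.card = S.card := Finset.card_sdiff_add_card_eq_card hBS
    have : S.card ≤ (n - 1) * d + d := by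
      rw [← hcards]
      exact Nat.add_le_add key hBcard
    refine le_trans this ?_
    have : (n - 1) * d + d = n * d := by
      have : n - 1 + 1 = n := Nat.succ_pred_eq_of_pos hn
      calc (n - 1) * d + d = (n - 1 + 1) * d := by ring
        _ = n * d := by rw [this]
    rw [this]
    simp

theorem stmt18 {V : Type*} [DecidableEq V] (r t N : ℕ) (hr : 2 ≤ r) (ht : 2 ≤ t)
    (parts : V → Fin r)
    (hN : (t - 1) * t ^ r < N)
    (M : Fin N → Finset (Finset V))
    (hsize : ∀ j, (M j).card = t)
    (hedge : ∀ j, ∀ e ∈ M j, e.card = r ∧ ∀ k : Fin r, ∃! v, v ∈ e ∧ parts v = k)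
    (hmatch : ∀ j, ∀ e ∈ M j, ∀ f ∈ M j, e ≠ f → Disjoint e f) :
    ∃ (i : Fin t → Fin N) (e : Fin t → Finset V),
      Function.Injective i ∧ (∀ k, e k ∈ M (i k)) ∧
      ∀ k l, k ≠ l → Disjoint (e k) (e l) := by
  classical
  by_contra hcon
  push_neg at hcon
  -- the set of all relevant vertices
  set U0 : Finset V := (Finset.univ : Finset (Fin N)).biUnion (fun j => (M j).biUnion id) with hU0
  have hmemU0 : ∀ (j : Fin N) (e : Finset V), e ∈ M j → ∀ v ∈ e, v ∈ U0 := by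
    intro j e he v hv
    rw [hU0]
    exact Finset.mem_biUnion.2 ⟨j, Finset.mem_univ _, Finset.mem_biUnion.2 ⟨e, he, hv⟩⟩
  -- vertex values
  set xval : V → ℚ := fun v => if h : v ∈ U0 then ((U0.equivFin ⟨v, h⟩ : Fin U0.card) : ℚ) else 0
    with hxval
  have hxinj : ∀ u ∈ U0, ∀ v ∈ U0, xval u = xval v → u = v := by
    intro u hu v hv h
    rw [hxval] at h
    simp only [dif_pos hu, dif_pos hv] at h
    have h1 : (U0.equivFin ⟨u, hu⟩ : Fin U0.card) = U0.equivFin ⟨v, hv⟩ := by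
      apply Fin.ext
      exact_mod_cast h
    have h2 := U0.equivFin.injective h1
    exact congrArg Subtype.val h2
  -- vertex selection per part
  set pickx : Finset V → Fin r → ℚ := fun e i =>
    if h : (e.filter fun u => parts u = i).Nonempty then xval h.choose else 0 with hpickx
  have hpick : ∀ (e : Finset V), (∀ i : Fin r, ∃! u, u ∈ e ∧ parts u = i) →
      ∀ i : Fin r, ∃ u, (u ∈ e ∧ parts u = i) ∧ pickx e i = xval u ∧
        ∀ u', u' ∈ e → parts u' = i → u' = u := by
    intro e he i
    obtain ⟨u, hu, huniq⟩ := he i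
    have hne : (e.filter fun u => parts u = i).Nonempty :=
      ⟨u, Finset.mem_filter.2 ⟨hu.1, hu.2⟩⟩
    have hcs := hne.choose_spec
    rw [Finset.mem_filter] at hcs
    have hval : hne.choose = u := huniq _ ⟨hcs.1, hcs.2⟩
    refine ⟨u, hu, ?_, fun u' h1 h2 => huniq u' ⟨h1, h2⟩⟩
    rw [hpickx]
    simp only [dif_pos hne]
    rw [hval]
  -- the embedding of edges
  set φ : Finset V → ((Fin r → Fin t) → ℚ) :=
    fun e k => ∏ i : Fin r, pickx e i ^ ((k i : ℕ)) with hφ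
  set A : Fin N → Set ((Fin r → Fin t) → ℚ) := fun j => φ '' ↑(M j) with hA
  -- apply the rainbow lemma
  have hbound := rainbow_lemma t (Finset.univ : Finset (Fin N)) A {Fm r t} ?_ ?_
  · -- contradiction with hN
    have h1 : Module.finrank ℚ ((Fin r → Fin t) → ℚ) = t ^ r := by
      rw [Module.finrank_fintype_fun_eq_card, Fintype.card_fun]
      simp
    rw [Finset.card_univ, Fintype.card_fin, h1] at hbound
    exact absurd hN (not_lt.2 hbound)
  · -- witnesses: each matching itself
    intro j _
    set E : Fin t → Finset V := fun s => ((M j).equivFin.symm (Fin.cast (hsize j).symm s) : Finset V)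
      with hE
    have hEmem : ∀ s, E s ∈ M j := fun s => ((M j).equivFin.symm _).2
    have hEinj : Function.Injective E := by
      intro s1 s2 h
      have h2 := (M j).equivFin.symm.injective (Subtype.ext h)
      have h3 := congrArg Fin.val h2
      simp only [Fin.coe_cast] at h3
      exact Fin.ext h3
    refine ⟨Fm r t, rfl, fun s => φ (E s), fun s => ⟨E s, hEmem s, rfl⟩, ?_⟩
    have heval : Fm r t (fun s => φ (E s))
        = ∏ i : Fin r, (Matrix.vandermonde fun s => pickx (E s) i).det :=
      Fm_prod_pow r t (fun s i => pickx (E s) i)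
    rw [heval]
    apply Finset.prod_ne_zero_iff.2
    intro i _
    rw [Matrix.det_vandermonde]
    apply Finset.prod_ne_zero_iff.2
    intro s _
    apply Finset.prod_ne_zero_iff.2
    intro s' hs'
    have hss' : s < s' := Finset.mem_Ioi.1 hs'
    obtain ⟨u, hu, hpu, -⟩ := hpick (E s) (hedge j (E s) (hEmem s)).2 i
    obtain ⟨u', hu', hpu', -⟩ := hpick (E s') (hedge j (E s') (hEmem s')).2 i
    have hEne : E s ≠ E s' := fun h => (Nat.lt_irrefl s) (hEinj h ▸ hss')
    have hdisj := hmatch j (E s) (hEmem s) (E s') (hEmem s') hEne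
    have hune : u ≠ u' := by
      intro h
      exact Finset.disjoint_left.1 hdisj hu.1 (h ▸ hu'.1)
    intro hzero
    apply hune
    apply hxinj u (hmemU0 j (E s) (hEmem s) u hu.1) u' (hmemU0 j (E s') (hEmem s') u' hu'.1)
    rw [← hpu, ← hpu']
    have := sub_eq_zero.1 hzero
    rw [this]
  · -- rainbow vanishing: no rainbow matching
    rintro f rfl g hgS hginj x hx
    choose e hemem heq using hx
    obtain ⟨k, l, hkl, hnd⟩ := hcon g e hginj hemem
    obtain ⟨u, huk, hul⟩ := Finset.not_disjoint_iff.1 hnd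
    have hxφ : x = fun s => φ (e s) := funext fun s => (heq s).symm
    rw [hxφ]
    have heval : Fm r t (fun s => φ (e s))
        = ∏ i : Fin r, (Matrix.vandermonde fun s => pickx (e s) i).det :=
      Fm_prod_pow r t (fun s i => pickx (e s) i)
    rw [heval]
    set i0 : Fin r := parts u with hi0
    obtain ⟨uk, huk', hpuk, hukuniq⟩ := hpick (e k) (hedge (g k) (e k) (hemem k)).2 i0
    obtain ⟨ul, hul', hpul, huluniq⟩ := hpick (e l) (hedge (g l) (e l) (hemem l)).2 i0
    have hkval : pickx (e k) i0 = xval u := by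
      rw [hpuk, hukuniq u huk rfl]
    have hlval : pickx (e l) i0 = xval u := by
      rw [hpul, huluniq u hul rfl]
    apply Finset.prod_eq_zero (Finset.mem_univ i0)
    rw [Matrix.det_vandermonde]
    rcases Ne.lt_or_gt hkl with h | h
    · apply Finset.prod_eq_zero (Finset.mem_univ k)
      apply Finset.prod_eq_zero (Finset.mem_Ioi.2 h)
      rw [hkval, hlval, sub_self]
    · apply Finset.prod_eq_zero (Finset.mem_univ l)
      apply Finset.prod_eq_zero (Finset.mem_Ioi.2 h)
      rw [hkval, hlval, sub_self]
end
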